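/- arXiv:1609.08098 — 5 statements merged into one kernel-verified Lean document; each statement's English description precedes it below -/
import Mathlib

section
/- Let ν be a positive finite Radon measure on an interval I = (0, l) with ν({x}) = 0 for all x. Then for every n ∈ ℕ and every a > 0 there exists a partition 0 = t_0 < t_1 < ... < t_n = l such that max_k (t_k − t_{k−1})^a ν((t_{k−1}, t_k)) ≤ l^a n^{−1−a} ν(I). -/
open MeasureTheory Set

/-!
With `M = ν(0, l)`, consider `G t = (a t / l + ν(0, t) / M) / (1 + a)`, a continuous strictly
increasing function from `G 0 = 0` to `G l = 1`, and choose the `t_k` with `G t_k = k / n`.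
On each cell, the increment `1 / n` of `G` is the weighted arithmetic mean of the relative length
`u = (t_k - t_{k-1}) / l` (weight `a`) and the relative mass `m = ν(I_k) / M` (weight `1`), so the
weighted AM-GM inequality gives `u ^ a * m ≤ n ^ (-1 - a)`. (If `M = 0`, every cell is null.)
-/

theorem Real.rpow_mul_le_weighted_mean_rpow {a u m : ℝ} (ha : 0 ≤ a) (hu : 0 ≤ u) (hm : 0 ≤ m) :
    u ^ a * m ≤ ((a * u + m) / (1 + a)) ^ (1 + a) := by
  have h1a : 0 < 1 + a := by linarith
  have hw : a / (1 + a) + 1 / (1 + a) = 1 := by field_simp; ring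
  calc u ^ a * m = (u ^ (a / (1 + a)) * m ^ (1 / (1 + a))) ^ (1 + a) := by
        rw [Real.mul_rpow (by positivity) (by positivity), ← Real.rpow_mul hu,
          ← Real.rpow_mul hm, div_mul_cancel₀ _ h1a.ne', div_mul_cancel₀ _ h1a.ne', Real.rpow_one]
    _ ≤ (a / (1 + a) * u + 1 / (1 + a) * m) ^ (1 + a) := by
        gcongr
        exact Real.geom_mean_le_arith_mean2_weighted (by positivity) (by positivity) hu hm hw
    _ = ((a * u + m) / (1 + a)) ^ (1 + a) := by ring_nf

theorem Real.rpow_mul_le_mul_weighted_mean_rpow {a w m l M : ℝ} (ha : 0 ≤ a) (hw : 0 ≤ w)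
    (hl : 0 < l) (hm : 0 ≤ m) (hmM : m ≤ M) :
    w ^ a * m ≤ l ^ a * M * ((a * (w / l) + m / M) / (1 + a)) ^ (1 + a) := by
  rcases (hm.trans hmM).eq_or_lt with rfl | hM
  · simp [le_antisymm hmM hm]
  calc w ^ a * m = l ^ a * M * ((w / l) ^ a * (m / M)) := by
        rw [Real.div_rpow hw hl.le]
        field_simp
    _ ≤ l ^ a * M * ((a * (w / l) + m / M) / (1 + a)) ^ (1 + a) := by
        gcongr
        exact Real.rpow_mul_le_weighted_mean_rpow ha (by positivity) (by positivity)

theorem intervalIntegral_one_sub_eq_measureReal_Ioo (ν : Measure ℝ) [IsLocallyFiniteMeasure ν]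
    [NullSingletonClass ν] (c : ℝ) {s r : ℝ} (hsr : s ≤ r) :
    ∫ _ in c..r, (1 : ℝ) ∂ν - ∫ _ in c..s, (1 : ℝ) ∂ν = ν.real (Ioo s r) := by
  rw [intervalIntegral.integral_interval_sub_left intervalIntegrable_const intervalIntegrable_const,
    intervalIntegral.integral_const', Ioc_eq_empty_of_le hsr, measureReal_empty, sub_zero,
    smul_eq_mul, mul_one, measureReal_congr Ioo_ae_eq_Ioc]

theorem exists_partition_equal_increments_of_strictMonoOn {G : ℝ → ℝ} {x y : ℝ} (hxy : x < y)
    (hmono : StrictMonoOn G (Icc x y)) (hcont : ContinuousOn G (Icc x y)) {n : ℕ} (hn : 0 < n) :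
    ∃ t : Fin (n + 1) → ℝ, StrictMono t ∧ t 0 = x ∧ t (Fin.last n) = y ∧
      ∀ k : Fin n, G (t k.succ) - G (t k.castSucc) = (G y - G x) / n := by
  have hstep : 0 < (G y - G x) / n :=
    div_pos (sub_pos.2 (hmono (left_mem_Icc.2 hxy.le) (right_mem_Icc.2 hxy.le) hxy)) (by positivity)
  have hv_mem (k : Fin (n + 1)) : G x + k * ((G y - G x) / n) ∈ Icc (G x) (G y) := by
    have hk : (k : ℝ) ≤ n := by exact_mod_cast k.is_le
    refine ⟨le_add_of_nonneg_right (by positivity), ?_⟩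
    calc G x + k * ((G y - G x) / n) ≤ G x + n * ((G y - G x) / n) := by gcongr
      _ = G y := by field_simp; ring
  choose t ht hGt using fun k => intermediate_value_Icc hxy.le hcont (hv_mem k)
  refine ⟨t, fun i j hij => (hmono.lt_iff_lt (ht i) (ht j)).1 ?_, ?_, ?_, fun k => ?_⟩
  · rw [hGt, hGt]
    gcongr
    exact_mod_cast hij
  · exact hmono.injOn (ht 0) (left_mem_Icc.2 hxy.le) (by simp [hGt])
  · exact hmono.injOn (ht _) (right_mem_Icc.2 hxy.le) (by rw [hGt, Fin.val_last]; field_simp; ring)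
  · rw [hGt, hGt, Fin.val_succ, Fin.val_castSucc]
    push_cast
    ring

/-- Partition lemma: for a finite nonatomic measure `ν` on `I = (0, l)`, every
`n ∈ ℕ` and `a > 0` admit a partition `0 = t_0 < t_1 < … < t_n = l` with
`max_k (t_k − t_{k−1})^a ν((t_{k−1}, t_k)) ≤ l^a n^{−1−a} ν(I)`. -/
theorem exists_partition_theta (ν : Measure ℝ) [IsFiniteMeasure ν]
    (hna : ∀ x : ℝ, ν {x} = 0) (l : ℝ) (hl : 0 < l) (a : ℝ) (ha : 0 < a)
    (n : ℕ) (hn : 0 < n) :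
    ∃ t : Fin (n + 1) → ℝ, StrictMono t ∧ t 0 = 0 ∧ t (Fin.last n) = l ∧
      ∀ k : Fin n, (t k.succ - t k.castSucc) ^ a *
          (ν (Set.Ioo (t k.castSucc) (t k.succ))).toReal ≤
        l ^ a * (n : ℝ) ^ (-1 - a) * (ν (Set.Ioo 0 l)).toReal := by
  have : NullSingletonClass ν := ⟨hna⟩
  set M := ν.real (Ioo 0 l)
  -- the primitive is `ν(0, t)` for `t ≥ 0`; its continuity for atomless `ν` is in the library
  set G : ℝ → ℝ := fun t => (a * (t / l) + (∫ _ in 0..t, (1 : ℝ) ∂ν) / M) / (1 + a)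
  have hG_sub {s r : ℝ} (h : s ≤ r) :
      G r - G s = (a * ((r - s) / l) + ν.real (Ioo s r) / M) / (1 + a) := by
    rw [← intervalIntegral_one_sub_eq_measureReal_Ioo ν 0 h]
    ring
  have hG_mono : StrictMono G := fun s r h => sub_pos.1 <| by
    have := sub_pos.2 h
    rw [hG_sub h.le]
    positivity
  have hG_cont : Continuous G := by
    have := intervalIntegral.continuous_primitive (μ := ν) (f := fun _ => (1 : ℝ))
      (fun _ _ => intervalIntegrable_const) 0
    fun_prop
  obtain ⟨t, ht, ht0, htl, hinc⟩ :=
    exists_partition_equal_increments_of_strictMonoOn hl (hG_mono.strictMonoOn _)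
      hG_cont.continuousOn hn
  refine ⟨t, ht, ht0, htl, fun k => ?_⟩
  have hsr : t k.castSucc ≤ t k.succ := ht.monotone k.castSucc_le_succ
  have hsub : Ioo (t k.castSucc) (t k.succ) ⊆ Ioo 0 l :=
    Ioo_subset_Ioo (ht0 ▸ ht.monotone (Fin.zero_le _)) (htl ▸ ht.monotone (Fin.le_last _))
  calc _ ≤ l ^ a * M * (G (t k.succ) - G (t k.castSucc)) ^ (1 + a) := by
        rw [hG_sub hsr]
        exact Real.rpow_mul_le_mul_weighted_mean_rpow ha.le (sub_nonneg.2 hsr) hl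
          measureReal_nonneg (measureReal_mono hsub)
    _ = l ^ a * (n : ℝ) ^ (-1 - a) * M := by
        rcases eq_or_ne M 0 with hM | hM
        · simp [hM]
        rw [hinc, hG_sub hl.le, sub_zero, div_self hl.ne', div_self hM, mul_one, add_comm,
          div_self (by positivity), one_div, Real.inv_rpow (by positivity),
          ← Real.rpow_neg (by positivity)]
        ring_nf
end

section
/- Let ν be a nonatomic positive finite Radon measure on I = (0, l). For every n ∈ ℕ there exist points 0 < t_1 < ... < t_n < l such that for all u ∈ W^1_2(I) with u(t_1) = ... = u(t_n) = 0, one has ∫_I |u(t)|² dν(t) ≤ (l/n²) ν(I) ∫_I |u'(t)|² dt. -/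
/-!
Let `F x = ν (-∞, x]`, continuous because `ν` has no atoms, and `M = ν (0, l]`. Cutting `[0, l]`
into `n + 1` pieces on which `F / M + x / l` increases by the same amount `≤ 2 / (n + 1)`, AM-GM
bounds the product of the `ν`-mass and the length of each piece by `l M / (n + 1)²`. The `n`
interior cut points are the `t k`, so `u` vanishes at an endpoint of every piece, and there
Cauchy–Schwarz gives `u x ² ≤ |piece| ∫_piece u'²`. Integrating against `ν` and summing over the
pieces gives the inequality.
-/

open MeasureTheory Set Filter Topology

theorem sq_integral_le_measureReal_mul_integral_sq {α : Type*} [MeasurableSpace α]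
    {μ : Measure α} [IsFiniteMeasure μ] {f : α → ℝ} (hf : Integrable f μ)
    (hf2 : Integrable (fun x => f x ^ 2) μ) :
    (∫ x, f x ∂μ) ^ 2 ≤ μ.real univ * ∫ x, f x ^ 2 ∂μ := by
  rcases eq_zero_or_neZero μ with rfl | _
  · simp
  have hμ : μ.real univ ≠ 0 := measureReal_univ_pos.ne'
  have jensen : (⨍ x, f x ∂μ) ^ 2 ≤ ⨍ x, f x ^ 2 ∂μ :=
    (Even.convexOn_pow even_two).map_average_le (continuous_pow 2).continuousOn isClosed_univ
      (ae_of_all _ fun x => mem_univ (f x)) hf hf2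
  rw [average_eq, average_eq, smul_eq_mul, smul_eq_mul] at jensen
  calc (∫ x, f x ∂μ) ^ 2 = μ.real univ ^ 2 * ((μ.real univ)⁻¹ * ∫ x, f x ∂μ) ^ 2 := by
        field_simp
    _ ≤ μ.real univ ^ 2 * ((μ.real univ)⁻¹ * ∫ x, f x ^ 2 ∂μ) := by gcongr
    _ = μ.real univ * ∫ x, f x ^ 2 ∂μ := by field_simp

theorem sq_intervalIntegral_le {f : ℝ → ℝ} {a b : ℝ} (hab : a ≤ b)
    (hf : IntervalIntegrable f volume a b)
    (hf2 : IntervalIntegrable (fun x => f x ^ 2) volume a b) :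
    (∫ x in a..b, f x) ^ 2 ≤ (b - a) * ∫ x in a..b, f x ^ 2 := by
  have : IsFiniteMeasure (volume.restrict (Ioc a b)) := by
    rw [isFiniteMeasure_restrict]; exact measure_Ioc_lt_top.ne
  simpa [intervalIntegral.integral_of_le hab, Real.volume_real_Ioc_of_le hab] using
    sq_integral_le_measureReal_mul_integral_sq hf.1 hf2.1

theorem eq_add_intervalIntegral_of_mem_Icc {u u' : ℝ → ℝ} {a b x z : ℝ}
    (hu : ∀ x ∈ Icc a b, u x = u a + ∫ s in a..x, u' s) (hu' : IntervalIntegrable u' volume a b)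
    (hx : x ∈ Icc a b) (hz : z ∈ Icc a b) : u x = u z + ∫ s in z..x, u' s := by
  have hsub : ∀ y ∈ Icc a b, IntervalIntegrable u' volume a y := fun y hy =>
    hu'.mono_set (uIcc_subset_uIcc left_mem_uIcc (Icc_subset_uIcc hy))
  rw [hu x hx, hu z hz, ← intervalIntegral.integral_interval_sub_left (hsub x hx) (hsub z hz)]
  ring

theorem sq_le_mul_integral_sq_of_eq_zero {u u' : ℝ → ℝ} {a b x z : ℝ}
    (hx : x ∈ Icc a b) (hz : z ∈ Icc a b) (hux : u x = u z + ∫ s in z..x, u' s) (huz : u z = 0)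
    (hu' : IntervalIntegrable u' volume a b)
    (hu'2 : IntervalIntegrable (fun s => u' s ^ 2) volume a b) :
    u x ^ 2 ≤ (b - a) * ∫ s in a..b, u' s ^ 2 := by
  have key : ∀ c ∈ Icc a b, ∀ d ∈ Icc a b, c ≤ d →
      (∫ s in c..d, u' s) ^ 2 ≤ (b - a) * ∫ s in a..b, u' s ^ 2 := by
    intro c hc d hd hcd
    have hsub : uIcc c d ⊆ uIcc a b := uIcc_subset_uIcc (Icc_subset_uIcc hc) (Icc_subset_uIcc hd)
    calc (∫ s in c..d, u' s) ^ 2 ≤ (d - c) * ∫ s in c..d, u' s ^ 2 :=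
          sq_intervalIntegral_le hcd (hu'.mono_set hsub) (hu'2.mono_set hsub)
      _ ≤ (b - a) * ∫ s in a..b, u' s ^ 2 := by
          refine mul_le_mul (by linarith [hc.1, hd.2]) ?_
            (intervalIntegral.integral_nonneg hcd fun s _ => sq_nonneg _) (by linarith [hc.1, hd.2])
          exact intervalIntegral.integral_mono_interval hc.1 hcd hd.2
            (ae_of_all _ fun s => sq_nonneg _) hu'2
  rw [hux, huz, zero_add]
  rcases le_total z x with hzx | hxz
  · exact key z hz x hx hzx
  · rw [intervalIntegral.integral_symm, neg_sq]
    exact key x hx z hz hxz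

theorem setIntegral_sq_le_of_eq_zero (ν : Measure ℝ) [IsFiniteMeasure ν] {u u' : ℝ → ℝ}
    {a b z : ℝ} (hz : z ∈ Icc a b) (hu : ∀ x ∈ Icc a b, u x = u z + ∫ s in z..x, u' s)
    (huz : u z = 0) (hu' : IntervalIntegrable u' volume a b)
    (hu'2 : IntervalIntegrable (fun s => u' s ^ 2) volume a b) :
    ∫ x in Ioc a b, u x ^ 2 ∂ν ≤ ν.real (Ioc a b) * (b - a) * ∫ s in a..b, u' s ^ 2 := by
  have hbound : ∀ x ∈ Ioc a b, ‖u x ^ 2‖ ≤ (b - a) * ∫ s in a..b, u' s ^ 2 := fun x hx => by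
    rw [Real.norm_of_nonneg (sq_nonneg _)]
    exact sq_le_mul_integral_sq_of_eq_zero (Ioc_subset_Icc_self hx) hz
      (hu x (Ioc_subset_Icc_self hx)) huz hu' hu'2
  calc ∫ x in Ioc a b, u x ^ 2 ∂ν ≤ ‖∫ x in Ioc a b, u x ^ 2 ∂ν‖ := Real.le_norm_self _
    _ ≤ (b - a) * (∫ s in a..b, u' s ^ 2) * ν.real (Ioc a b) :=
        norm_setIntegral_le_of_norm_le_const (measure_lt_top ν _) hbound
    _ = ν.real (Ioc a b) * (b - a) * ∫ s in a..b, u' s ^ 2 := by ring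

theorem setIntegral_sq_le_of_partition (ν : Measure ℝ) [IsFiniteMeasure ν] {u u' : ℝ → ℝ}
    {τ : ℕ → ℝ} (hτ : Monotone τ) {m : ℕ} {C : ℝ}
    (hu : ∀ x ∈ Icc (τ 0) (τ m), u x = u (τ 0) + ∫ s in τ 0..x, u' s)
    (hu' : IntervalIntegrable u' volume (τ 0) (τ m))
    (hu'2 : IntervalIntegrable (fun s => u' s ^ 2) volume (τ 0) (τ m))
    (hzero : ∀ k < m, ∃ z ∈ Icc (τ k) (τ (k + 1)), u z = 0)
    (hC : ∀ k < m, ν.real (Ioc (τ k) (τ (k + 1))) * (τ (k + 1) - τ k) ≤ C) :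
    ∫ x in Ioc (τ 0) (τ m), u x ^ 2 ∂ν ≤ C * ∫ s in τ 0..τ m, u' s ^ 2 := by
  have h0m : τ 0 ≤ τ m := hτ m.zero_le
  have hpiece : ∀ k < m, Icc (τ k) (τ (k + 1)) ⊆ Icc (τ 0) (τ m) := fun k hk =>
    Icc_subset_Icc (hτ k.zero_le) (hτ hk)
  have huIcc : ∀ k < m, uIcc (τ k) (τ (k + 1)) ⊆ uIcc (τ 0) (τ m) := fun k hk => by
    simpa only [uIcc_of_le (hτ k.le_succ), uIcc_of_le h0m] using hpiece k hk
  have hucont : ContinuousOn u (Icc (τ 0) (τ m)) := by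
    have hprim := intervalIntegral.continuousOn_primitive_interval (μ := volume)
      (uIcc_of_le h0m ▸ (intervalIntegrable_iff_integrableOn_Icc_of_le h0m).1 hu')
    rw [uIcc_of_le h0m] at hprim
    exact (continuousOn_const.add hprim).congr hu
  have hu2 : ∀ k < m, IntervalIntegrable (fun x => u x ^ 2) ν (τ k) (τ (k + 1)) := fun k hk =>
    ((hucont.pow 2).mono (by simpa only [uIcc_of_le h0m] using huIcc k hk)).intervalIntegrable
  have hu'2k : ∀ k < m, IntervalIntegrable (fun s => u' s ^ 2) volume (τ k) (τ (k + 1)) :=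
    fun k hk => hu'2.mono_set (huIcc k hk)
  have hbound : ∀ k < m,
      ∫ x in τ k..τ (k + 1), u x ^ 2 ∂ν ≤ C * ∫ s in τ k..τ (k + 1), u' s ^ 2 := by
    intro k hk
    obtain ⟨z, hz, huz⟩ := hzero k hk
    rw [intervalIntegral.integral_of_le (hτ k.le_succ)]
    calc ∫ x in Ioc (τ k) (τ (k + 1)), u x ^ 2 ∂ν
        ≤ ν.real (Ioc (τ k) (τ (k + 1))) * (τ (k + 1) - τ k) * ∫ s in τ k..τ (k + 1), u' s ^ 2 :=
          setIntegral_sq_le_of_eq_zero ν hz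
            (fun x hx =>
              eq_add_intervalIntegral_of_mem_Icc hu hu' (hpiece k hk hx) (hpiece k hk hz))
            huz (hu'.mono_set (huIcc k hk)) (hu'2k k hk)
      _ ≤ C * ∫ s in τ k..τ (k + 1), u' s ^ 2 :=
          mul_le_mul_of_nonneg_right (hC k hk)
            (intervalIntegral.integral_nonneg (hτ k.le_succ) fun s _ => sq_nonneg _)
  calc ∫ x in Ioc (τ 0) (τ m), u x ^ 2 ∂ν = ∫ x in τ 0..τ m, u x ^ 2 ∂ν :=
        (intervalIntegral.integral_of_le h0m).symm
    _ = ∑ k ∈ Finset.range m, ∫ x in τ k..τ (k + 1), u x ^ 2 ∂ν :=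
        (intervalIntegral.sum_integral_adjacent_intervals hu2).symm
    _ ≤ ∑ k ∈ Finset.range m, C * ∫ s in τ k..τ (k + 1), u' s ^ 2 :=
        Finset.sum_le_sum fun k hk => hbound k (Finset.mem_range.1 hk)
    _ = C * ∫ s in τ 0..τ m, u' s ^ 2 := by
        rw [← Finset.mul_sum, intervalIntegral.sum_integral_adjacent_intervals hu'2k]

theorem measureReal_Iic_sub_measureReal_Iic (μ : Measure ℝ) [IsFiniteMeasure μ] {a b : ℝ}
    (hab : a ≤ b) : μ.real (Iic b) - μ.real (Iic a) = μ.real (Ioc a b) := by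
  rw [← Iic_sdiff_Iic, measureReal_sdiff (Iic_subset_Iic.2 hab) measurableSet_Iic]

theorem continuous_measureReal_Iic (μ : Measure ℝ) [IsFiniteMeasure μ] [NullSingletonClass μ] :
    Continuous fun x => μ.real (Iic x) := by
  refine continuous_iff_continuousAt.2 fun b => tendsto_iff_dist_tendsto_zero.2 ?_
  have hdist : Tendsto (fun y => |y - b|) (𝓝 b) (𝓝 0) := by
    simpa using (continuous_sub_right b).abs.tendsto b
  have hshrink : Tendsto (fun y => μ.real (Icc (b - |y - b|) (b + |y - b|))) (𝓝 b) (𝓝 0) :=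
    (ENNReal.tendsto_toReal ENNReal.zero_ne_top).comp ((tendsto_measure_Icc μ b).comp hdist)
  refine squeeze_zero (fun _ => dist_nonneg) (fun y => ?_) hshrink
  rw [Real.dist_eq]
  rcases le_total b y with hby | hyb
  · rw [measureReal_Iic_sub_measureReal_Iic μ hby, abs_of_nonneg measureReal_nonneg]
    exact measureReal_mono (Ioc_subset_Icc_self.trans
      (Icc_subset_Icc (by linarith [abs_nonneg (y - b)]) (by linarith [le_abs_self (y - b)])))
  · rw [abs_sub_comm, measureReal_Iic_sub_measureReal_Iic μ hyb, abs_of_nonneg measureReal_nonneg]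
    exact measureReal_mono (Ioc_subset_Icc_self.trans
      (Icc_subset_Icc (by linarith [neg_abs_le (y - b)]) (by linarith [abs_nonneg (y - b)])))

theorem OrderIso.exists_equipartition (e : ℝ ≃o ℝ) {a b : ℝ} (hab : a < b) {m : ℕ}
    (hm : m ≠ 0) : ∃ τ : ℕ → ℝ, StrictMono τ ∧ τ 0 = a ∧ τ m = b ∧
      ∀ k, e (τ (k + 1)) - e (τ k) = (e b - e a) / m := by
  have hstep : 0 < (e b - e a) / m := div_pos (sub_pos.2 (e.strictMono hab)) (by positivity)
  refine ⟨fun k => e.symm (e a + k * ((e b - e a) / m)), ?_, by simp, ?_, fun k => ?_⟩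
  · exact e.symm.strictMono.comp fun i j hij => by gcongr
  · have hcancel : (m : ℝ) * ((e b - e a) / m) = e b - e a := by field_simp
    simp [hcancel]
  · simp only [OrderIso.apply_symm_apply]
    push_cast
    ring

theorem mul_le_of_div_add_div_le {p q M l N : ℝ} (hp : 0 ≤ p) (hpM : p ≤ M) (hq : 0 ≤ q)
    (hl : 0 < l) (h : p / M + q / l ≤ 2 / N) : p * q ≤ l * M / N ^ 2 := by
  rcases hp.trans hpM |>.eq_or_lt with hM | hM
  · have : p = 0 := le_antisymm (hM ▸ hpM) hp
    simp [this, ← hM]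
  have hx : 0 ≤ p / M := by positivity
  have hy : 0 ≤ q / l := by positivity
  have hsq : (p / M + q / l) ^ 2 ≤ (2 / N) ^ 2 := pow_le_pow_left₀ (add_nonneg hx hy) h 2
  have hamgm : p / M * (q / l) ≤ (1 / N) ^ 2 := by
    have : (2 / N) ^ 2 = 4 * (1 / N) ^ 2 := by ring
    nlinarith [sq_nonneg (p / M - q / l)]
  calc p * q = l * M * (p / M * (q / l)) := by field_simp
    _ ≤ l * M * (1 / N) ^ 2 := by gcongr
    _ = l * M / N ^ 2 := by ring

theorem exists_partition_measureReal_mul_le (ν : Measure ℝ) [IsFiniteMeasure ν]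
    [NullSingletonClass ν] {l : ℝ} (hl : 0 < l) {m : ℕ} (hm : m ≠ 0) :
    ∃ τ : ℕ → ℝ, StrictMono τ ∧ τ 0 = 0 ∧ τ m = l ∧ ∀ k < m,
      ν.real (Ioc (τ k) (τ (k + 1))) * (τ (k + 1) - τ k) ≤ l * ν.real (Ioc 0 l) / m ^ 2 := by
  set M := ν.real (Ioc 0 l)
  have hM : 0 ≤ M := measureReal_nonneg
  set F : ℝ → ℝ := fun x => ν.real (Iic x)
  have hFmono : Monotone F := fun x y hxy => measureReal_mono (Iic_subset_Iic.2 hxy)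
  -- If `M = 0` then `F x / M = 0` and the points below are equally spaced.
  set G : ℝ → ℝ := fun x => F x / M + x / l
  have hGmono : StrictMono G := (hFmono.div_const hM).add_strictMono (strictMono_id.div_const hl)
  have hGsurj : Function.Surjective G :=
    (((continuous_measureReal_Iic ν).div_const M).add (continuous_id.div_const l)).surjective
      (tendsto_atTop_add_left_of_le _ 0 (fun x => div_nonneg measureReal_nonneg hM)
        (tendsto_id.atTop_div_const hl))
      (tendsto_atBot_add_left_of_ge _ (ν.real univ / M)
        (fun x => div_le_div_of_nonneg_right (measureReal_mono (subset_univ _)) hM)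
        (tendsto_id.atBot_div_const hl))
  obtain ⟨τ, hτ, hτ0, hτm, hGstep⟩ :=
    (StrictMono.orderIsoOfSurjective G hGmono hGsurj).exists_equipartition hl hm
  simp only [StrictMono.coe_orderIsoOfSurjective] at hGstep
  refine ⟨τ, hτ, hτ0, hτm, fun k hk => ?_⟩
  have hsub : Ioc (τ k) (τ (k + 1)) ⊆ Ioc 0 l :=
    hτ0 ▸ hτm ▸ Ioc_subset_Ioc (hτ.monotone k.zero_le) (hτ.monotone hk)
  refine mul_le_of_div_add_div_le measureReal_nonneg (measureReal_mono hsub)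
    (sub_nonneg.2 (hτ.monotone k.le_succ)) hl ?_
  calc ν.real (Ioc (τ k) (τ (k + 1))) / M + (τ (k + 1) - τ k) / l
        = G (τ (k + 1)) - G (τ k) := by
        rw [← measureReal_Iic_sub_measureReal_Iic ν (hτ.monotone k.le_succ)]
        ring
    _ = (M / M + 1) / m := by
        have hFl : F l - F 0 = M := measureReal_Iic_sub_measureReal_Iic ν hl.le
        rw [hGstep]
        congr 1
        simp only [G, ← hFl, div_self hl.ne']
        ring
    _ ≤ 2 / m := by
        gcongr
        linarith [div_self_le_one M]

/-- For a nonatomic finite measure `ν` on `I = (0, l)` and any `n ∈ ℕ` there are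
points `0 < t_1 < … < t_n < l` such that every `u ∈ W^1_2(I)` (represented as an
absolutely continuous function `u(x) = u(0) + ∫_0^x u'` with `u' ∈ L²`) vanishing
at `t_1, …, t_n` satisfies `∫_I |u|² dν ≤ (l/n²) ν(I) ∫_I |u'|² dt`. -/
theorem exists_partition_poincare (ν : Measure ℝ) [IsFiniteMeasure ν]
    (hna : ∀ x : ℝ, ν {x} = 0) (l : ℝ) (hl : 0 < l) (n : ℕ) (hn : 0 < n) :
    ∃ t : Fin n → ℝ, StrictMono t ∧ (∀ k, t k ∈ Set.Ioo 0 l) ∧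
      ∀ u u' : ℝ → ℝ,
        (∀ x ∈ Set.Icc 0 l, u x = u 0 + ∫ s in (0 : ℝ)..x, u' s) →
        IntervalIntegrable u' volume 0 l →
        IntervalIntegrable (fun s => (u' s) ^ 2) volume 0 l →
        (∀ k, u (t k) = 0) →
        (∫ x in Set.Ioo 0 l, (u x) ^ 2 ∂ν) ≤
          l / (n : ℝ) ^ 2 * (ν (Set.Ioo 0 l)).toReal * ∫ s in (0 : ℝ)..l, (u' s) ^ 2 := by
  have : NullSingletonClass ν := ⟨hna⟩
  obtain ⟨τ, hτ, hτ0, hτl, hτC⟩ := exists_partition_measureReal_mul_le ν hl n.succ_ne_zero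
  refine ⟨fun k => τ (k + 1), fun i j hij => hτ (Nat.succ_lt_succ hij),
    fun k => ⟨hτ0 ▸ hτ k.val.succ_pos, hτl ▸ hτ (Nat.succ_lt_succ k.isLt)⟩, ?_⟩
  intro u u' hu hu' hu'2 hzero
  have hpiece : ∀ k < n + 1, ∃ z ∈ Icc (τ k) (τ (k + 1)), u z = 0 := fun k hk => by
    rcases (Nat.lt_succ_iff.1 hk).lt_or_eq with hkn | rfl
    · exact ⟨τ (k + 1), right_mem_Icc.2 (hτ.monotone k.le_succ), hzero ⟨k, hkn⟩⟩
    · refine ⟨τ k, left_mem_Icc.2 (hτ.monotone k.le_succ), ?_⟩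
      simpa [Nat.sub_add_cancel hn] using hzero ⟨k - 1, by omega⟩
  have hC : ∀ k < n + 1, ν.real (Ioc (τ k) (τ (k + 1))) * (τ (k + 1) - τ k)
      ≤ l * ν.real (Ioc 0 l) / (n : ℝ) ^ 2 := fun k hk =>
    (hτC k hk).trans (by gcongr; linarith)
  have key := setIntegral_sq_le_of_partition ν hτ.monotone (hτ0 ▸ hτl ▸ hu)
    (hτ0 ▸ hτl ▸ hu') (hτ0 ▸ hτl ▸ hu'2) hpiece hC
  rw [hτ0, hτl] at key
  rw [← integral_Ioc_eq_integral_Ioo, ← measureReal_def, measureReal_congr Ioo_ae_eq_Ioc]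
  exact key.trans_eq (by ring)
end

section
/- Let u ∈ W^1_2([0,1]) with u(0)=0 and κ > 0. Then for all x ∈ (0,1]: |u(x)|²/x ≤ (1/(2κ))(1 + √(1+4κ)) ( ∫_0^1 |u'(t)|² dt + κ ∫_0^1 |u(t)|²/t² dt ), and the right-hand side is finite. -/
open MeasureTheory Set intervalIntegral Real Filter

/-! Replace `u` by the primitive of `u'`, which is absolutely continuous with derivative `u'`
almost everywhere, so that `u(x)² = ∫₀ˣ 2 u u'`. For `0 < t ≤ x`, AM–GM gives
`2 u u' ≤ x (α⁻¹ u'² + α u²/t²)`, hence `u(x)²/x ≤ α⁻¹ ∫₀¹ u'² + α ∫₀¹ u²/t²`; the constant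
`C = (1 + √(1 + 4κ))/(2κ)` solves `κ C² = C + 1`, so `α = C⁻¹` satisfies `α ≤ κ C`.

Finiteness of `∫₀¹ u²/t²` is Hardy's inequality: integrating `u²` by parts against `1/t` on
`[ε, 1]` and completing the square `4u'² - 4uu'/t + u²/t² = (2u' - u/t)²` bounds `∫_ε^1 u²/t²`
by `4 ∫_ε^1 u'² + 2 u(ε)²/ε`, and Cauchy–Schwarz gives `u(ε)² ≤ ε ∫₀^ε u'²`. -/

theorem sq_intervalIntegral_le_mul_integral_sq {g : ℝ → ℝ} {a b : ℝ} (hab : a ≤ b)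
    (hg : IntervalIntegrable g volume a b)
    (hg2 : IntervalIntegrable (fun x => g x ^ 2) volume a b) :
    (∫ x in a..b, g x) ^ 2 ≤ (b - a) * ∫ x in a..b, g x ^ 2 := by
  rcases hab.eq_or_lt with rfl | hab
  · simp
  have hvol : volume (Ioc a b) ≠ 0 := by simp [hab]
  have := (even_two.convexOn_pow (𝕜 := ℝ)).map_set_average_le (continuousOn_pow 2) isClosed_univ
    hvol measure_Ioc_lt_top.ne (Eventually.of_forall fun x => mem_univ _) hg.1 hg2.1
  simp only [setAverage_eq, Real.volume_real_Ioc_of_le hab.le, smul_eq_mul, mul_pow] at this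
  have hba : b - a ≠ 0 := (sub_pos.2 hab).ne'
  rw [integral_of_le hab.le, integral_of_le hab.le]
  calc (∫ x in Ioc a b, g x) ^ 2 = (b - a) ^ 2 * ((b - a)⁻¹ ^ 2 * (∫ x in Ioc a b, g x) ^ 2) := by
        field_simp
    _ ≤ (b - a) ^ 2 * ((b - a)⁻¹ * ∫ x in Ioc a b, g x ^ 2) := by gcongr
    _ = (b - a) * ∫ x in Ioc a b, g x ^ 2 := by field_simp

theorem two_mul_mul_le_of_pos_of_le {p q t x α : ℝ} (hα : 0 < α) (ht : 0 < t) (htx : t ≤ x) :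
    2 * p * q ≤ x * (α⁻¹ * q ^ 2 + α * (p ^ 2 / t ^ 2)) := by
  have hsq : t * (α⁻¹ * q ^ 2 + α * (p ^ 2 / t ^ 2)) - 2 * p * q
      = α⁻¹ * t * (q - α * p / t) ^ 2 := by
    field_simp
    ring
  have hnonneg : 0 ≤ α⁻¹ * t * (q - α * p / t) ^ 2 := by positivity
  calc 2 * p * q ≤ t * (α⁻¹ * q ^ 2 + α * (p ^ 2 / t ^ 2)) := by linarith
    _ ≤ x * (α⁻¹ * q ^ 2 + α * (p ^ 2 / t ^ 2)) := by gcongr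

theorem ContinuousOn.intervalIntegrable_sq_div_sq {u : ℝ → ℝ} {a b : ℝ}
    (hu : ContinuousOn u (uIcc a b)) (h0 : (0 : ℝ) ∉ uIcc a b) :
    IntervalIntegrable (fun t => u t ^ 2 / t ^ 2) volume a b :=
  ((hu.pow 2).div (continuousOn_pow 2) fun _ ht =>
    pow_ne_zero 2 fun h => h0 (h ▸ ht)).intervalIntegrable

theorem deriv_ae_eq_of_ae_hasDerivAt {u u' : ℝ → ℝ} {a b : ℝ}
    (hu' : ∀ᵐ x, x ∈ uIcc a b → HasDerivAt u (u' x) x) :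
    deriv u =ᵐ[volume.restrict (uIoc a b)] u' := by
  rw [EventuallyEq, ae_restrict_iff' measurableSet_uIoc]
  filter_upwards [hu'] with x hx hxab
  exact (hx (uIoc_subset_uIcc hxab)).deriv

namespace AbsolutelyContinuousOnInterval

variable {u u' v v' : ℝ → ℝ} {a b : ℝ}

theorem intervalIntegrable_of_ae_hasDerivAt (hu : AbsolutelyContinuousOnInterval u a b)
    (hu' : ∀ᵐ x, x ∈ uIcc a b → HasDerivAt u (u' x) x) :
    IntervalIntegrable u' volume a b :=
  hu.intervalIntegrable_deriv.congr_ae (deriv_ae_eq_of_ae_hasDerivAt hu')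

theorem integral_eq_sub_of_ae_hasDerivAt (hu : AbsolutelyContinuousOnInterval u a b)
    (hu' : ∀ᵐ x, x ∈ uIcc a b → HasDerivAt u (u' x) x) :
    ∫ x in a..b, u' x = u b - u a := by
  rw [← hu.integral_deriv_eq_sub,
    integral_congr_ae_restrict (deriv_ae_eq_of_ae_hasDerivAt hu').symm]

theorem integral_mul_add_mul_eq_sub (hu : AbsolutelyContinuousOnInterval u a b)
    (hv : AbsolutelyContinuousOnInterval v a b)
    (hu' : ∀ᵐ x, x ∈ uIcc a b → HasDerivAt u (u' x) x)
    (hv' : ∀ᵐ x, x ∈ uIcc a b → HasDerivAt v (v' x) x) :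
    ∫ x in a..b, u' x * v x + u x * v' x = u b * v b - u a * v a := by
  rw [← hu.integral_deriv_mul_eq_sub hv]
  refine integral_congr_ae_restrict ?_
  filter_upwards [deriv_ae_eq_of_ae_hasDerivAt hu', deriv_ae_eq_of_ae_hasDerivAt hv']
    with x hxu hxv
  rw [hxu, hxv]

theorem sq_sub_sq_eq_integral (hu : AbsolutelyContinuousOnInterval u a b)
    (hu' : ∀ᵐ x, x ∈ uIcc a b → HasDerivAt u (u' x) x) :
    u b ^ 2 - u a ^ 2 = ∫ x in a..b, 2 * u x * u' x := by
  rw [sq, sq, ← integral_mul_add_mul_eq_sub hu hu hu' hu']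
  congr 1 with x
  ring

theorem sq_sub_le_mul_integral_sq (hab : a ≤ b) (hu : AbsolutelyContinuousOnInterval u a b)
    (hu' : ∀ᵐ x, x ∈ uIcc a b → HasDerivAt u (u' x) x)
    (hu'2 : IntervalIntegrable (fun x => u' x ^ 2) volume a b) :
    (u b - u a) ^ 2 ≤ (b - a) * ∫ x in a..b, u' x ^ 2 := by
  rw [← integral_eq_sub_of_ae_hasDerivAt hu hu']
  exact sq_intervalIntegral_le_mul_integral_sq hab (intervalIntegrable_of_ae_hasDerivAt hu hu') hu'2

theorem integral_two_mul_div_mul_sub_sq_div_sq (ha : 0 < a) (hab : a ≤ b)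
    (hu : AbsolutelyContinuousOnInterval u a b)
    (hu' : ∀ᵐ x, x ∈ uIcc a b → HasDerivAt u (u' x) x) :
    ∫ t in a..b, (2 * u t / t * u' t - u t ^ 2 / t ^ 2) = u b ^ 2 / b - u a ^ 2 / a := by
  have hpos : ∀ t ∈ uIcc a b, 0 < t := fun t ht => ha.trans_le (uIcc_of_le hab ▸ ht).1
  have hinv : AbsolutelyContinuousOnInterval (fun t : ℝ => t⁻¹) a b :=
    ((contDiffOn_inv ℝ).mono fun t ht => (hpos t ht).ne').absolutelyContinuousOnInterval
  have hibp := integral_mul_add_mul_eq_sub (hu.mul hu) hinv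
    (hu'.mono fun x hx hxab => (hx hxab).mul (hx hxab))
    (Eventually.of_forall fun x hx => hasDerivAt_inv (hpos x hx).ne')
  simp only [Pi.mul_apply] at hibp
  calc ∫ t in a..b, (2 * u t / t * u' t - u t ^ 2 / t ^ 2)
      = ∫ t in a..b, (u' t * u t + u t * u' t) * t⁻¹ + u t * u t * -(t ^ 2)⁻¹ :=
        integral_congr fun t _ => by ring
    _ = u b ^ 2 / b - u a ^ 2 / a := by rw [hibp]; ring

theorem integral_sq_div_sq_le (hu : AbsolutelyContinuousOnInterval u 0 b)
    (hu' : ∀ᵐ x, x ∈ uIcc 0 b → HasDerivAt u (u' x) x) (hu0 : u 0 = 0)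
    (hu'2 : IntervalIntegrable (fun x => u' x ^ 2) volume 0 b) {ε : ℝ} (hε : 0 < ε)
    (hεb : ε ≤ b) :
    ∫ t in ε..b, u t ^ 2 / t ^ 2 ≤ 4 * ∫ t in 0..b, u' t ^ 2 := by
  have hεsub : uIcc ε b ⊆ uIcc 0 b := uIcc_subset_uIcc_right (mem_uIcc_of_le hε.le hεb)
  have h0sub : uIcc 0 ε ⊆ uIcc 0 b := uIcc_subset_uIcc_left (mem_uIcc_of_le hε.le hεb)
  have hpos : ∀ t ∈ uIcc ε b, 0 < t := fun t ht => hε.trans_le (uIcc_of_le hεb ▸ ht).1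
  have huε := hu.mono hεsub
  have huε' : ∀ᵐ x, x ∈ uIcc ε b → HasDerivAt u (u' x) x :=
    hu'.mono fun x hx hxε => hx (hεsub hxε)
  have hu'2ε := hu'2.mono_set hεsub
  have hH := ContinuousOn.intervalIntegrable_sq_div_sq huε.continuousOn
    fun h => (hpos 0 h).false
  have hD : IntervalIntegrable (fun t => 2 * u t / t * u' t - u t ^ 2 / t ^ 2) volume ε b :=
    ((intervalIntegrable_of_ae_hasDerivAt huε huε').continuousOn_mul
      ((continuousOn_const.mul huε.continuousOn).div continuousOn_id
        fun t ht => (hpos t ht).ne')).sub hH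
  have hsquare : ∀ t ∈ Icc ε b,
      u t ^ 2 / t ^ 2 ≤ 4 * u' t ^ 2 - 2 * (2 * u t / t * u' t - u t ^ 2 / t ^ 2) := by
    intro t _
    have h : 4 * u' t ^ 2 - 2 * (2 * u t / t * u' t - u t ^ 2 / t ^ 2) - u t ^ 2 / t ^ 2
        = (2 * u' t - u t / t) ^ 2 := by ring
    linarith [sq_nonneg (2 * u' t - u t / t)]
  have hCS := sq_sub_le_mul_integral_sq hε.le (hu.mono h0sub)
    (hu'.mono fun x hx hxε => hx (h0sub hxε)) (hu'2.mono_set h0sub)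
  rw [hu0, sub_zero, sub_zero] at hCS
  have hbdry : u ε ^ 2 / ε ≤ ∫ t in (0 : ℝ)..ε, u' t ^ 2 := by
    rw [div_le_iff₀ hε]
    linarith
  have hA0 : 0 ≤ ∫ t in (0 : ℝ)..ε, u' t ^ 2 := integral_nonneg hε.le fun t _ => sq_nonneg _
  have hb : 0 ≤ u b ^ 2 / b := div_nonneg (sq_nonneg _) (hε.le.trans hεb)
  calc ∫ t in ε..b, u t ^ 2 / t ^ 2
      ≤ ∫ t in ε..b, (4 * u' t ^ 2 - 2 * (2 * u t / t * u' t - u t ^ 2 / t ^ 2)) :=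
        integral_mono_on hεb hH ((hu'2ε.const_mul 4).sub (hD.const_mul 2)) hsquare
    _ = 4 * (∫ t in ε..b, u' t ^ 2) - 2 * (u b ^ 2 / b - u ε ^ 2 / ε) := by
        rw [integral_sub (hu'2ε.const_mul 4) (hD.const_mul 2),
          intervalIntegral.integral_const_mul, intervalIntegral.integral_const_mul,
          integral_two_mul_div_mul_sub_sq_div_sq hε hεb huε huε']
    _ ≤ 4 * ((∫ t in (0 : ℝ)..ε, u' t ^ 2) + ∫ t in ε..b, u' t ^ 2) := by linarith
    _ = 4 * ∫ t in (0 : ℝ)..b, u' t ^ 2 := by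
        rw [integral_add_adjacent_intervals (hu'2.mono_set h0sub) hu'2ε]

theorem intervalIntegrable_sq_div_sq (hb : 0 < b) (hu : AbsolutelyContinuousOnInterval u 0 b)
    (hu' : ∀ᵐ x, x ∈ uIcc 0 b → HasDerivAt u (u' x) x) (hu0 : u 0 = 0)
    (hu'2 : IntervalIntegrable (fun x => u' x ^ 2) volume 0 b) :
    IntervalIntegrable (fun t => u t ^ 2 / t ^ 2) volume 0 b := by
  set ε : ℕ → ℝ := fun n => b * (1 / (n + 1))
  have hε : ∀ n, 0 < ε n := fun n => by positivity
  have hεb : ∀ n, ε n ≤ b := fun n =>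
    mul_le_of_le_one_right hb.le (div_le_one_of_le₀ (by linarith [n.cast_nonneg (α := ℝ)])
      (by positivity))
  have hεint : ∀ n, IntervalIntegrable (fun t => u t ^ 2 / t ^ 2) volume (ε n) b := fun n =>
    ContinuousOn.intervalIntegrable_sq_div_sq
      ((hu.mono (uIcc_subset_uIcc_right (mem_uIcc_of_le (hε n).le (hεb n)))).continuousOn)
      fun h => by rw [uIcc_of_le (hεb n)] at h; exact (hε n).not_ge h.1
  have hlim : Tendsto ε atTop (nhds 0) := by
    simpa only [mul_zero] using tendsto_one_div_add_atTop_nhds_zero_nat.const_mul b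
  rw [intervalIntegrable_iff_integrableOn_Ioc_of_le hb.le]
  refine integrableOn_Ioc_of_intervalIntegral_norm_bounded_left
    (I := 4 * ∫ t in (0 : ℝ)..b, u' t ^ 2) (fun n => (hεint n).1) hlim
    (Eventually.of_forall fun n => ?_)
  simp only [norm_div, norm_pow, Real.norm_eq_abs, sq_abs]
  rw [← integral_of_le (hεb n)]
  exact integral_sq_div_sq_le hu hu' hu0 hu'2 (hε n) (hεb n)

theorem sq_div_le_inv_mul_add_mul (hu : AbsolutelyContinuousOnInterval u 0 b)
    (hu' : ∀ᵐ x, x ∈ uIcc 0 b → HasDerivAt u (u' x) x) (hu0 : u 0 = 0)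
    (hu'2 : IntervalIntegrable (fun x => u' x ^ 2) volume 0 b) {α x : ℝ} (hα : 0 < α)
    (hx : x ∈ Ioc 0 b) :
    u x ^ 2 / x ≤ α⁻¹ * (∫ t in (0 : ℝ)..b, u' t ^ 2) + α * ∫ t in (0 : ℝ)..b, u t ^ 2 / t ^ 2 := by
  have hH := intervalIntegrable_sq_div_sq (hx.1.trans_le hx.2) hu hu' hu0 hu'2
  have hxsub : uIcc 0 x ⊆ uIcc 0 b := uIcc_subset_uIcc_left (mem_uIcc_of_le hx.1.le hx.2)
  have hux := hu.mono hxsub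
  have hux' : ∀ᵐ y, y ∈ uIcc 0 x → HasDerivAt u (u' y) y := hu'.mono fun y hy hyx => hy (hxsub hyx)
  have hsq := sq_sub_sq_eq_integral hux hux'
  rw [hu0, zero_pow two_ne_zero, sub_zero] at hsq
  have hprod : IntervalIntegrable (fun t => 2 * u t * u' t) volume 0 x :=
    (intervalIntegrable_of_ae_hasDerivAt hux hux').continuousOn_mul
      (continuousOn_const.mul hux.continuousOn)
  have hu'2x := hu'2.mono_set hxsub
  have hHx := hH.mono_set hxsub
  rw [div_le_iff₀ hx.1]
  calc u x ^ 2 = ∫ t in (0 : ℝ)..x, 2 * u t * u' t := hsq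
    _ ≤ ∫ t in (0 : ℝ)..x, x * (α⁻¹ * u' t ^ 2 + α * (u t ^ 2 / t ^ 2)) :=
        integral_mono_on_of_le_Ioo hx.1.le hprod
          (((hu'2x.const_mul _).add (hHx.const_mul _)).const_mul _)
          fun t ht => two_mul_mul_le_of_pos_of_le hα ht.1 ht.2.le
    _ = x * (α⁻¹ * (∫ t in (0 : ℝ)..x, u' t ^ 2) + α * ∫ t in (0 : ℝ)..x, u t ^ 2 / t ^ 2) := by
        rw [intervalIntegral.integral_const_mul,
          integral_add (hu'2x.const_mul _) (hHx.const_mul _),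
          intervalIntegral.integral_const_mul, intervalIntegral.integral_const_mul]
    _ ≤ x * (α⁻¹ * (∫ t in (0 : ℝ)..b, u' t ^ 2) + α * ∫ t in (0 : ℝ)..b, u t ^ 2 / t ^ 2) := by
        refine mul_le_mul_of_nonneg_left (add_le_add ?_ ?_) hx.1.le
        · exact mul_le_mul_of_nonneg_left (integral_mono_interval le_rfl hx.1.le hx.2
            (Eventually.of_forall fun t => sq_nonneg (u' t)) hu'2) (inv_pos.2 hα).le
        · exact mul_le_mul_of_nonneg_left (integral_mono_interval le_rfl hx.1.le hx.2
            (Eventually.of_forall fun t => by positivity) hH) hα.le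
    _ = _ := mul_comm _ _

end AbsolutelyContinuousOnInterval

/-- Hardy–Sobolev inequality on `[0,1]`: if `u ∈ W^1_2([0,1])` (absolutely
continuous with `u' ∈ L²`) satisfies `u(0) = 0` and `κ > 0`, then the right-hand
side below is finite and for all `x ∈ (0,1]`,
`|u(x)|²/x ≤ (1/(2κ))(1 + √(1+4κ)) (∫_0^1 |u'|² dt + κ ∫_0^1 |u|²/t² dt)`. -/
theorem hardy_sobolev_zero_one (κ : ℝ) (hκ : 0 < κ) (u u' : ℝ → ℝ)
    (hrep : ∀ x ∈ Set.Icc (0 : ℝ) 1, u x = u 0 + ∫ s in (0 : ℝ)..x, u' s)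
    (hint' : IntervalIntegrable u' volume 0 1)
    (hint : IntervalIntegrable (fun s => (u' s) ^ 2) volume 0 1)
    (hu0 : u 0 = 0) :
    IntervalIntegrable (fun t => (u t) ^ 2 / t ^ 2) volume 0 1 ∧
      ∀ x ∈ Set.Ioc (0 : ℝ) 1,
        (u x) ^ 2 / x ≤
          (1 / (2 * κ)) * (1 + Real.sqrt (1 + 4 * κ)) *
            ((∫ t in (0 : ℝ)..1, (u' t) ^ 2) +
              κ * ∫ t in (0 : ℝ)..1, (u t) ^ 2 / t ^ 2) := by
  set F : ℝ → ℝ := fun x => ∫ s in (0 : ℝ)..x, u' s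
  have hF : AbsolutelyContinuousOnInterval F 0 1 :=
    hint'.absolutelyContinuousOnInterval_intervalIntegral left_mem_uIcc
  have hF' : ∀ᵐ x, x ∈ uIcc 0 1 → HasDerivAt F (u' x) x := by
    filter_upwards [hint'.ae_hasDerivAt_integral] with x hx hx01
    exact hx hx01 0 left_mem_uIcc
  have hF0 : F 0 = 0 := integral_same
  have huF : EqOn u F (uIcc 0 1) := fun t ht => by
    rw [uIcc_of_le zero_le_one] at ht
    simp only [hrep t ht, hu0, zero_add, F]
  have hsqF : EqOn (fun t => u t ^ 2 / t ^ 2) (fun t => F t ^ 2 / t ^ 2) (uIcc 0 1) :=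
    fun t ht => by simp only [huF ht]
  refine ⟨(hF.intervalIntegrable_sq_div_sq one_pos hF' hF0 hint).congr
    (hsqF.symm.mono uIoc_subset_uIcc), fun x hx => ?_⟩
  set s := √(1 + 4 * κ)
  set C := 1 / (2 * κ) * (1 + s)
  have hC : 0 < C := by positivity
  have hCinv : C⁻¹ ≤ κ * C := by
    have hroot : κ * C ^ 2 = C + 1 := by
      have hs : s ^ 2 = 1 + 4 * κ := Real.sq_sqrt (by linarith)
      simp only [C]
      field_simp
      linear_combination hs
    rw [inv_le_iff_one_le_mul₀ hC]
    nlinarith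
  have hB : 0 ≤ ∫ t in (0 : ℝ)..1, u t ^ 2 / t ^ 2 :=
    integral_nonneg zero_le_one fun t _ => by positivity
  calc u x ^ 2 / x = F x ^ 2 / x := by
        rw [huF (Icc_subset_uIcc (Ioc_subset_Icc_self hx))]
    _ ≤ C⁻¹⁻¹ * (∫ t in (0 : ℝ)..1, u' t ^ 2) + C⁻¹ * ∫ t in (0 : ℝ)..1, F t ^ 2 / t ^ 2 :=
        hF.sq_div_le_inv_mul_add_mul hF' hF0 hint (inv_pos.2 hC) hx
    _ ≤ C * ((∫ t in (0 : ℝ)..1, u' t ^ 2) + κ * ∫ t in (0 : ℝ)..1, u t ^ 2 / t ^ 2) := by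
        rw [inv_inv, ← integral_congr hsqF]
        nlinarith [mul_le_mul_of_nonneg_right hCinv hB]
end

section
/- Let μ be a positive Radon measure on ℝ² such that μ({x}) = 0 for all x. For θ ∈ [0,π), let l_θ denote any line in direction (cos θ, sin θ). Then the set Σ = { θ ∈ [0,π) : there exists a line l_θ with μ(l_θ) > 0 } is at most countable. -/
/-!
Lines with distinct directions in `[0, π)` meet in at most one point, which is `μ`-null, so
choosing one line of positive measure for each direction in the set gives an almost disjoint
family of sets of positive measure. An s-finite measure admits only countably many of those.
-/

open MeasureTheory Set Real

/-- The line through `p` in the direction `(cos θ, sin θ)`. -/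
def lineDir (θ : ℝ) (p : ℝ × ℝ) : Set (ℝ × ℝ) :=
  {x | ∃ t : ℝ, x = p + t • ((Real.cos θ, Real.sin θ) : ℝ × ℝ)}

theorem MeasureTheory.Measure.countable_of_pairwise_countable_inter {α ι : Type*}
    [MeasurableSpace α] {μ : Measure α} [SFinite μ] [NullSingletonClass μ] {s : ι → Set α}
    (hs : ∀ i, NullMeasurableSet (s i) μ) (hpos : ∀ i, μ (s i) ≠ 0)
    (hinter : Pairwise fun i j => (s i ∩ s j).Countable) : Countable ι := by
  have hdisj : Pairwise (Function.onFun (AEDisjoint μ) s) := fun i j hij =>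
    (hinter hij).measure_zero μ
  simpa [pos_iff_ne_zero, hpos, Set.countable_univ_iff] using
    Measure.countable_meas_pos_of_disjoint_iUnion₀ hs hdisj

theorem AffineSubspace.inter_subsingleton_of_disjoint_direction {k V P : Type*} [Ring k]
    [AddCommGroup V] [Module k V] [AddTorsor V P] {s t : AffineSubspace k P}
    (h : Disjoint s.direction t.direction) : ((s : Set P) ∩ t).Subsingleton := by
  rintro x ⟨hxs, hxt⟩ y ⟨hys, hyt⟩
  rw [← vsub_eq_zero_iff_eq]
  exact Submodule.disjoint_def.mp h _ (vsub_mem_direction hxs hys) (vsub_mem_direction hxt hyt)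

lemma lineDir_eq_mk' (θ : ℝ) (p : ℝ × ℝ) :
    lineDir θ p = AffineSubspace.mk' p (ℝ ∙ (cos θ, sin θ)) := by
  ext x
  simp only [lineDir, mem_ofPred_eq, SetLike.mem_coe, AffineSubspace.mem_mk',
    Submodule.mem_span_singleton, vsub_eq_sub, eq_comm (b := x - p), sub_eq_iff_eq_add']

lemma isClosed_lineDir (θ : ℝ) (p : ℝ × ℝ) : IsClosed (lineDir θ p) := by
  rw [lineDir_eq_mk']
  exact AffineSubspace.closed_of_finiteDimensional _

lemma sin_sub_ne_zero_of_mem_Ico {θ₁ θ₂ : ℝ} (h₁ : θ₁ ∈ Ico 0 π) (h₂ : θ₂ ∈ Ico 0 π)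
    (hne : θ₁ ≠ θ₂) : sin (θ₂ - θ₁) ≠ 0 := by
  rcases hne.lt_or_gt with hlt | hlt
  · exact (sin_pos_of_pos_of_lt_pi (by linarith) (by linarith [h₁.1, h₂.2])).ne'
  · rw [← neg_sub, sin_neg, neg_ne_zero]
    exact (sin_pos_of_pos_of_lt_pi (by linarith) (by linarith [h₂.1, h₁.2])).ne'

lemma disjoint_span_cos_sin {θ₁ θ₂ : ℝ} (h₁ : θ₁ ∈ Ico 0 π) (h₂ : θ₂ ∈ Ico 0 π)
    (hne : θ₁ ≠ θ₂) :
    Disjoint (ℝ ∙ ((cos θ₁, sin θ₁) : ℝ × ℝ)) (ℝ ∙ (cos θ₂, sin θ₂)) := by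
  have hunit : ((cos θ₂, sin θ₂) : ℝ × ℝ) ≠ 0 := by
    intro h
    obtain ⟨hc, hs⟩ := Prod.mk_eq_zero.mp h
    simpa [hc, hs] using cos_sq_add_sin_sq θ₂
  rw [Submodule.disjoint_span_singleton' hunit, Submodule.mem_span_singleton]
  rintro ⟨a, ha⟩
  simp only [Prod.smul_mk, smul_eq_mul, Prod.mk.injEq] at ha
  apply sin_sub_ne_zero_of_mem_Ico h₁ h₂ hne
  rw [sin_sub, ← ha.1, ← ha.2]
  ring

lemma lineDir_inter_subsingleton {θ₁ θ₂ : ℝ} (h₁ : θ₁ ∈ Ico 0 π) (h₂ : θ₂ ∈ Ico 0 π)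
    (hne : θ₁ ≠ θ₂) (p q : ℝ × ℝ) : (lineDir θ₁ p ∩ lineDir θ₂ q).Subsingleton := by
  rw [lineDir_eq_mk', lineDir_eq_mk']
  apply AffineSubspace.inter_subsingleton_of_disjoint_direction
  simpa only [AffineSubspace.direction_mk'] using disjoint_span_cos_sin h₁ h₂ hne

theorem countable_directions_general (μ : Measure (ℝ × ℝ)) [SigmaFinite μ]
    (hna : ∀ x : ℝ × ℝ, μ {x} = 0) :
    Set.Countable {θ ∈ Set.Ico 0 π | ∃ p : ℝ × ℝ, 0 < μ (lineDir θ p)} := by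
  have : NullSingletonClass μ := ⟨hna⟩
  set S := {θ ∈ Set.Ico 0 π | ∃ p : ℝ × ℝ, 0 < μ (lineDir θ p)}
  choose p hp using fun θ : S => θ.2.2
  rw [← Set.countable_coe_iff]
  refine Measure.countable_of_pairwise_countable_inter (s := fun θ : S => lineDir θ (p θ))
    (fun θ => (isClosed_lineDir _ _).measurableSet.nullMeasurableSet) (fun θ => (hp θ).ne')
    fun θ₁ θ₂ hne => ?_
  exact (lineDir_inter_subsingleton θ₁.2.1 θ₂.2.1 (Subtype.coe_injective.ne hne) _ _).countable

/-- For a Radon measure `μ` on `ℝ²` (σ-finite, finite on compacts) without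
atoms, the set of directions `θ ∈ [0, π)` for which some line in direction `θ`
has positive measure is at most countable. -/
theorem countable_directions (μ : Measure (ℝ × ℝ)) [SigmaFinite μ]
    [IsFiniteMeasureOnCompacts μ] (hna : ∀ x : ℝ × ℝ, μ {x} = 0) :
    Set.Countable {θ ∈ Set.Ico 0 π | ∃ p : ℝ × ℝ, 0 < μ (lineDir θ p)} :=
  countable_directions_general μ hna
end

section
/- Let 𝓑(s) = (1+s)ln(1+s) − s. Then as t → 0+, t·𝓑^{-1}(1/t) = (1/ln(1/t))·(1 + o(1)); equivalently, 𝓑^{-1}(r) ~ r/ln r as r → ∞. -/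
/-!
Since `log (1 + s) ~ log s`, we have `𝓑(s) ~ s log s`, hence `log 𝓑(s) ~ log s` and
`s ~ 𝓑(s) / log 𝓑(s)` as `s → ∞`. Substituting `s = 𝓑⁻¹(r)`, which tends to `∞` because
`𝓑(s) ≤ s²`, gives `𝓑⁻¹(r) ~ r / log r`.
-/

open Filter Topology

/-- The N-function `𝓑(s) = (1+s)·ln(1+s) − s`. -/
noncomputable def BFun (s : ℝ) : ℝ := (1 + s) * Real.log (1 + s) - s

open Asymptotics Real

lemma BFun_le_sq {s : ℝ} (hs : 0 ≤ s) : BFun s ≤ s ^ 2 := by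
  have hlog : log (1 + s) ≤ s := by
    linarith [log_le_sub_one_of_pos (by linarith : 0 < 1 + s)]
  unfold BFun
  nlinarith [mul_le_mul_of_nonneg_left hlog (by linarith : 0 ≤ 1 + s)]

lemma one_add_isEquivalent_id : (fun s : ℝ => 1 + s) ~[atTop] id :=
  IsEquivalent.refl.const_add_of_norm_tendsto_atTop (tendsto_norm_atTop_atTop.comp tendsto_id)

lemma BFun_isEquivalent : BFun ~[atTop] fun s => s * log s := by
  have hmul : (fun s => (1 + s) * log (1 + s)) ~[atTop] fun s => s * log s :=
    one_add_isEquivalent_id.mul (one_add_isEquivalent_id.log tendsto_id)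
  have hlin : (fun s : ℝ => s) =o[atTop] fun s => s * log s := by
    simpa using (isBigO_refl (fun s : ℝ => s) atTop).mul_isLittleO
      (isLittleO_const_log_atTop (c := 1))
  exact hmul.sub_isLittleO hlin

lemma log_mul_log_isEquivalent_log : (fun s => log (s * log s)) ~[atTop] log := by
  have hloglog : (fun s => log (log s)) =o[atTop] log :=
    isLittleO_log_id_atTop.comp_tendsto tendsto_log_atTop
  refine (IsEquivalent.refl.add_isLittleO hloglog).congr_left ?_
  filter_upwards [eventually_gt_atTop 1] with s hs
  exact (log_mul (by linarith) (log_pos hs).ne').symm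

lemma isEquivalent_div_log_of_isEquivalent_mul_log {f : ℝ → ℝ}
    (hf : f ~[atTop] fun s => s * log s) :
    (fun s => s) ~[atTop] fun s => f s / log (f s) := by
  have hlog : (fun s => log (f s)) ~[atTop] log :=
    (hf.log (tendsto_id.atTop_mul_atTop₀ tendsto_log_atTop)).trans log_mul_log_isEquivalent_log
  refine ((hf.div hlog).congr_right ?_).symm
  filter_upwards [eventually_gt_atTop 1] with s hs
  exact mul_div_cancel_right₀ s (log_pos hs).ne'

lemma tendsto_atTop_of_BFun_eq {g : ℝ → ℝ} (hg : ∀ r ≥ (0 : ℝ), 0 ≤ g r ∧ BFun (g r) = r) :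
    Tendsto g atTop atTop := by
  refine tendsto_atTop_mono' _ ?_ tendsto_sqrt_atTop
  filter_upwards [eventually_ge_atTop 0] with r hr
  obtain ⟨hg0, hgr⟩ := hg r hr
  exact sqrt_le_iff.mpr ⟨hg0, hgr.symm.trans_le (BFun_le_sq hg0)⟩

/-- Asymptotics of the inverse of `𝓑` at `∞`: if `g` is the (nonnegative)
inverse function of `𝓑`, then `𝓑^{-1}(r) ~ r/ln r` as `r → ∞`; equivalently
`t·𝓑^{-1}(1/t) = (1/ln(1/t))(1 + o(1))` as `t → 0+`. -/
theorem BFun_inv_asymp_top (g : ℝ → ℝ)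
    (hg : ∀ r ≥ (0 : ℝ), 0 ≤ g r ∧ BFun (g r) = r) :
    Tendsto (fun r => g r / (r / Real.log r)) atTop (nhds 1) := by
  have hequiv : g ~[atTop] fun r => r / log r := by
    refine ((isEquivalent_div_log_of_isEquivalent_mul_log BFun_isEquivalent).comp_tendsto
      (tendsto_atTop_of_BFun_eq hg)).congr_right ?_
    filter_upwards [eventually_ge_atTop 0] with r hr
    simp only [Function.comp_apply, (hg r hr).2]
  refine (isEquivalent_iff_tendsto_one ?_).mp hequiv
  filter_upwards [eventually_gt_atTop 1] with r hr
  exact div_ne_zero (by linarith) (log_pos hr).ne'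
end
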